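/- For every n ∈ ℕ, the function y ↦ q(n,y) is a strictly increasing bijection from ℝ onto (0,1); in particular q(n,y) → 1 as y → ∞ and q(n,y) → 0 as y → −∞. -/

import Mathlib

open MeasureTheory Real Set Filter

/-- The natural parameter domain of the exponential family generated by `ν`. -/
def expDom (ν : Measure ℝ) : Set ℝ :=
  {u : ℝ | Integrable (fun x => Real.exp (u * x)) ν}

/-- The cumulant generating function `B(u) = log ∫ e^{u x} dν(x)`. -/
noncomputable def cgf (ν : Measure ℝ) (u : ℝ) : ℝ :=
  Real.log (∫ x, Real.exp (u * x) ∂ν)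

/-- The (topological) support of a measure: points all of whose neighbourhoods
have nonzero measure. -/
def msupport (μ : MeasureTheory.Measure ℝ) : Set ℝ :=
  {x : ℝ | ∀ U ∈ nhds x, μ U ≠ 0}

/-- The normalizing constant `Z(n,y) = ∫ e^{uy - nB(u)} dμ(u)`. -/
noncomputable def Z (ν μ : Measure ℝ) (n : ℕ) (y : ℝ) : ℝ :=
  ∫ u, Real.exp (u * y - (n : ℝ) * cgf ν u) ∂μ

/-- The posterior probability `q(n,y) = P(Θ > θ₀ | Y_n = y)`. -/
noncomputable def q (ν μ : Measure ℝ) (θ₀ : ℝ) (n : ℕ) (y : ℝ) : ℝ :=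
  (∫ u in Set.Ioi θ₀, Real.exp (u * y - (n : ℝ) * cgf ν u) ∂μ) / Z ν μ n y

/-- The posterior distribution `μ_{n,y}(du) = e^{uy - nB(u)} μ(du) / Z(n,y)`. -/
noncomputable def post (ν μ : Measure ℝ) (n : ℕ) (y : ℝ) : Measure ℝ :=
  (ENNReal.ofReal (Z ν μ n y))⁻¹ •
    μ.withDensity (fun u => ENNReal.ofReal (Real.exp (u * y - (n : ℝ) * cgf ν u)))

/-- The one-step transition operator: `(T_n f)(p) = E_{n,p}[f(Π_{n+1})]`, where
`Y n p` is the point on the `p`-level curve at time `n`. -/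
noncomputable def T (ν μ : Measure ℝ) (θ₀ : ℝ) (Y : ℕ → ℝ → ℝ) (n : ℕ)
    (f : ℝ → ℝ) (p : ℝ) : ℝ :=
  ∫ x, f (q ν μ θ₀ (n + 1) (Y n p + x)) *
      (Z ν μ (n + 1) (Y n p + x) / Z ν μ n (Y n p)) ∂ν

/-- The finite-horizon value functions `W k n p`. -/
noncomputable def W (ν μ : Measure ℝ) (θ₀ : ℝ) (Y : ℕ → ℝ → ℝ) (c : ℝ) :
    ℕ → ℕ → ℝ → ℝ
  | 0, _, p => min p (1 - p)
  | k + 1, n, p =>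
      min (min p (1 - p)) (c + T ν μ θ₀ Y n (W ν μ θ₀ Y c k (n + 1)) p)

/-- The value function `V(n,p) = lim_k W_k(n,p) = ⨅ k, W_k(n,p)`. -/
noncomputable def Vfun (ν μ : Measure ℝ) (θ₀ : ℝ) (Y : ℕ → ℝ → ℝ) (c : ℝ)
    (n : ℕ) (p : ℝ) : ℝ :=
  ⨅ k : ℕ, W ν μ θ₀ Y c k n p


section AuxQ

lemma measurable_cgf (ν : Measure ℝ) [SigmaFinite ν] : Measurable (cgf ν) := by
  have h : StronglyMeasurable fun u : ℝ => ∫ x, Real.exp (u * x) ∂ν := by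
    have hc : StronglyMeasurable fun p : ℝ × ℝ => Real.exp (p.1 * p.2) :=
      (Real.continuous_exp.comp (continuous_fst.mul continuous_snd)).stronglyMeasurable
    exact hc.integral_prod_right'
  exact Real.measurable_log.comp h.measurable

lemma measurable_g (ν : Measure ℝ) [SigmaFinite ν] (n : ℕ) (y : ℝ) :
    Measurable fun u : ℝ => Real.exp (u * y - (n : ℝ) * cgf ν u) :=
  Real.measurable_exp.comp
    ((measurable_id.mul_const y).sub ((measurable_cgf ν).const_mul _))

lemma integrable_g {ν μ : Measure ℝ} [SigmaFinite ν] {n : ℕ} {y : ℝ}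
    (h : Integrable (fun u => (1 + |u|) * Real.exp (u * y - (n : ℝ) * cgf ν u)) μ) :
    Integrable (fun u => Real.exp (u * y - (n : ℝ) * cgf ν u)) μ := by
  refine h.mono (measurable_g ν n y).aestronglyMeasurable (ae_of_all _ fun u => ?_)
  have h1 : (0:ℝ) < Real.exp (u * y - (n : ℝ) * cgf ν u) := Real.exp_pos _
  have h2 : (0:ℝ) ≤ |u| := abs_nonneg u
  rw [Real.norm_eq_abs, Real.norm_eq_abs, abs_of_nonneg h1.le,
    abs_of_nonneg (by positivity)]
  nlinarith

lemma setIntegral_exp_pos {ν μ : Measure ℝ} [SigmaFinite ν] {s : Set ℝ}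
    (hs : MeasurableSet s) (hμs : μ s ≠ 0) {n : ℕ} {y : ℝ}
    (hi : Integrable (fun u => Real.exp (u * y - (n : ℝ) * cgf ν u)) μ) :
    0 < ∫ u in s, Real.exp (u * y - (n : ℝ) * cgf ν u) ∂μ := by
  rw [setIntegral_pos_iff_support_of_nonneg_ae
    (ae_of_all _ fun u => (Real.exp_pos _).le) hi.integrableOn]
  have hsup : (Function.support fun u : ℝ => Real.exp (u * y - (n : ℝ) * cgf ν u)) = univ := by
    ext u; simp [Function.mem_support, (Real.exp_pos _).ne']
  rw [hsup, univ_inter]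
  exact pos_iff_ne_zero.mpr hμs

end AuxQ

/-- For each `n`, `y ↦ q(n,y)` is a strictly increasing bijection from `ℝ` onto
`(0,1)`; in particular `q(n,y) → 1` as `y → ∞` and `q(n,y) → 0` as `y → -∞`. -/
theorem q_strictMono_bijection (ν μ : Measure ℝ) [SigmaFinite ν]
    [IsProbabilityMeasure μ] (θ₀ : ℝ)
    (hsupp : msupport μ ⊆ interior (expDom ν))
    (h0 : 0 < μ (Set.Ioi θ₀)) (h1 : μ (Set.Ioi θ₀) < 1)
    (hint : ∀ (n : ℕ) (y : ℝ),
      Integrable (fun u => (1 + |u|) * Real.exp (u * y - (n : ℝ) * cgf ν u)) μ)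
    (n : ℕ) :
    StrictMono (q ν μ θ₀ n) ∧
    Set.BijOn (q ν μ θ₀ n) Set.univ (Set.Ioo 0 1) ∧
    Tendsto (q ν μ θ₀ n) atTop (nhds 1) ∧
    Tendsto (q ν μ θ₀ n) atBot (nhds 0) := by
  classical
  have hgmeas : ∀ y : ℝ, Measurable fun u : ℝ => Real.exp (u * y - (n : ℝ) * cgf ν u) :=
    fun y => measurable_g ν n y
  have hgint : ∀ y : ℝ, Integrable (fun u => Real.exp (u * y - (n : ℝ) * cgf ν u)) μ :=
    fun y => integrable_g (hint n y)
  set A : ℝ → ℝ := fun y => ∫ u in Ioi θ₀, Real.exp (u * y - (n : ℝ) * cgf ν u) ∂μ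
    with hAdef
  set Bt : ℝ → ℝ := fun y => ∫ u in Iic θ₀, Real.exp (u * y - (n : ℝ) * cgf ν u) ∂μ
    with hBdef
  have hApos : ∀ y, 0 < A y := fun y =>
    setIntegral_exp_pos measurableSet_Ioi h0.ne' (hgint y)
  have hμIic : μ (Iic θ₀) ≠ 0 := by
    intro h
    have h2 : μ univ ≤ μ (Ioi θ₀) + μ (Iic θ₀) := by
      rw [← Set.Iic_union_Ioi (a := θ₀), union_comm]
      exact measure_union_le _ _
    rw [h, add_zero, measure_univ] at h2
    exact absurd (lt_of_lt_of_le h1 h2) (lt_irrefl _)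
  have hBpos : ∀ y, 0 < Bt y := fun y =>
    setIntegral_exp_pos measurableSet_Iic hμIic (hgint y)
  have hZeq : ∀ y, Z ν μ n y = A y + Bt y := by
    intro y
    have h := integral_add_compl (measurableSet_Ioi (a := θ₀)) (hgint y)
    rw [compl_Ioi] at h
    exact h.symm
  have hq : ∀ y, q ν μ θ₀ n y = A y / (A y + Bt y) := fun y => by
    rw [← hZeq y]; rfl
  -- strict monotonicity
  have hkey : ∀ y₁ y₂ : ℝ, y₁ < y₂ → A y₁ * Bt y₂ < A y₂ * Bt y₁ := by
    intro y₁ y₂ hy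
    have hBc : Real.exp (θ₀ * (y₁ - y₂)) * Bt y₂ ≤ Bt y₁ := by
      simp only [hBdef]
      rw [← integral_const_mul]
      refine setIntegral_mono_on ((hgint y₂).integrableOn.const_mul _)
        (hgint y₁).integrableOn measurableSet_Iic fun u hu => ?_
      rw [← Real.exp_add]
      apply Real.exp_le_exp.mpr
      have hu' : u ≤ θ₀ := hu
      nlinarith
    have hpt : ∀ u ∈ Ioi θ₀,
        Real.exp (u * y₁ - (n : ℝ) * cgf ν u) * Bt y₂ <
          Real.exp (u * y₂ - (n : ℝ) * cgf ν u) * Bt y₁ := by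
      intro u hu
      have hgc : Real.exp (u * y₁ - (n : ℝ) * cgf ν u) <
          Real.exp (θ₀ * (y₁ - y₂)) * Real.exp (u * y₂ - (n : ℝ) * cgf ν u) := by
        rw [← Real.exp_add]
        apply Real.exp_lt_exp.mpr
        have hu' : θ₀ < u := hu
        nlinarith
      calc Real.exp (u * y₁ - (n : ℝ) * cgf ν u) * Bt y₂
          < (Real.exp (θ₀ * (y₁ - y₂)) * Real.exp (u * y₂ - (n : ℝ) * cgf ν u)) * Bt y₂ :=
            mul_lt_mul_of_pos_right hgc (hBpos y₂)
        _ = Real.exp (u * y₂ - (n : ℝ) * cgf ν u) * (Real.exp (θ₀ * (y₁ - y₂)) * Bt y₂) := by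
            ring
        _ ≤ Real.exp (u * y₂ - (n : ℝ) * cgf ν u) * Bt y₁ :=
            mul_le_mul_of_nonneg_left hBc (Real.exp_pos _).le
    have hdiff : 0 < ∫ u in Ioi θ₀,
        (Real.exp (u * y₂ - (n : ℝ) * cgf ν u) * Bt y₁ -
          Real.exp (u * y₁ - (n : ℝ) * cgf ν u) * Bt y₂) ∂μ := by
      rw [setIntegral_pos_iff_support_of_nonneg_ae
        ((ae_restrict_iff' measurableSet_Ioi).2
          (ae_of_all _ fun u hu => sub_nonneg.2 (hpt u hu).le))
        (((hgint y₂).mul_const _).sub ((hgint y₁).mul_const _)).integrableOn]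
      refine lt_of_lt_of_le h0 (measure_mono fun u hu => ⟨?_, hu⟩)
      exact (sub_pos.2 (hpt u hu)).ne'
    have heq : (∫ u in Ioi θ₀,
        (Real.exp (u * y₂ - (n : ℝ) * cgf ν u) * Bt y₁ -
          Real.exp (u * y₁ - (n : ℝ) * cgf ν u) * Bt y₂) ∂μ)
        = A y₂ * Bt y₁ - A y₁ * Bt y₂ := by
      rw [integral_sub ((hgint y₂).mul_const _).integrableOn
        ((hgint y₁).mul_const _).integrableOn, integral_mul_const, integral_mul_const]
    rw [heq] at hdiff
    linarith
  have hmono : StrictMono (q ν μ θ₀ n) := by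
    intro y₁ y₂ h
    rw [hq y₁, hq y₂, div_lt_div_iff₀ (add_pos (hApos y₁) (hBpos y₁))
      (add_pos (hApos y₂) (hBpos y₂))]
    nlinarith [hkey y₁ y₂ h]
  have hq01 : ∀ y, q ν μ θ₀ n y ∈ Ioo (0:ℝ) 1 := by
    intro y
    rw [hq y]
    refine ⟨div_pos (hApos y) (add_pos (hApos y) (hBpos y)), ?_⟩
    rw [div_lt_one (add_pos (hApos y) (hBpos y))]
    linarith [hBpos y]
  -- continuity
  have hScont : ∀ s : Set ℝ,
      Continuous fun y => ∫ u in s, Real.exp (u * y - (n : ℝ) * cgf ν u) ∂μ := by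
    intro s
    rw [continuous_iff_continuousAt]
    intro y₀
    have hbound : Integrable (fun u => Real.exp (u * (y₀ - 1) - (n : ℝ) * cgf ν u) +
        Real.exp (u * (y₀ + 1) - (n : ℝ) * cgf ν u)) (μ.restrict s) :=
      ((hgint (y₀ - 1)).add (hgint (y₀ + 1))).restrict
    refine tendsto_integral_filter_of_dominated_convergence
      (μ := μ.restrict s) (l := nhds y₀)
      (F := fun (y : ℝ) (u : ℝ) => Real.exp (u * y - (n : ℝ) * cgf ν u))
      (f := fun u => Real.exp (u * y₀ - (n : ℝ) * cgf ν u))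
      (bound := fun u => Real.exp (u * (y₀ - 1) - (n : ℝ) * cgf ν u) +
        Real.exp (u * (y₀ + 1) - (n : ℝ) * cgf ν u))
      (Eventually.of_forall fun y => (hgmeas y).aestronglyMeasurable.restrict)
      ?_ hbound ?_
    · filter_upwards [Icc_mem_nhds (by linarith : y₀ - 1 < y₀) (by linarith : y₀ < y₀ + 1)]
        with y hy
      refine ae_of_all _ fun u => ?_
      rw [Real.norm_eq_abs, abs_of_nonneg (Real.exp_pos _).le]
      have h1 := Real.exp_pos (u * (y₀ - 1) - (n : ℝ) * cgf ν u)
      have h2 := Real.exp_pos (u * (y₀ + 1) - (n : ℝ) * cgf ν u)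
      rcases le_total u 0 with hu | hu
      · have hle : u * y - (n : ℝ) * cgf ν u ≤ u * (y₀ - 1) - (n : ℝ) * cgf ν u := by
          nlinarith [hy.1, hy.2]
        linarith [Real.exp_le_exp.mpr hle]
      · have hle : u * y - (n : ℝ) * cgf ν u ≤ u * (y₀ + 1) - (n : ℝ) * cgf ν u := by
          nlinarith [hy.1, hy.2]
        linarith [Real.exp_le_exp.mpr hle]
    · refine ae_of_all _ fun u => ?_
      exact (Real.continuous_exp.comp
        ((continuous_const.mul continuous_id).sub continuous_const)).tendsto y₀
  have hqcont : Continuous (q ν μ θ₀ n) := by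
    have hc : Continuous fun y => A y / (A y + Bt y) := by
      refine Continuous.div ?_ ?_ fun y => (add_pos (hApos y) (hBpos y)).ne'
      · exact hScont (Ioi θ₀)
      · exact (hScont (Ioi θ₀)).add (hScont (Iic θ₀))
    have hfe : q ν μ θ₀ n = fun y => A y / (A y + Bt y) := funext hq
    rw [hfe]; exact hc
  -- limit at +∞
  obtain ⟨θ₁, hθ₀₁, hμθ₁⟩ : ∃ θ₁, θ₀ < θ₁ ∧ μ (Ioi θ₁) ≠ 0 := by
    by_contra hcon
    push_neg at hcon
    have hz : ∀ k : ℕ, μ (Ioi (θ₀ + 1 / ((k : ℝ) + 1))) = 0 := fun k =>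
      hcon _ (lt_add_of_pos_right θ₀ (by positivity))
    have hun : Ioi θ₀ ⊆ ⋃ k : ℕ, Ioi (θ₀ + 1 / ((k : ℝ) + 1)) := by
      intro x hx
      obtain ⟨k, hk⟩ := exists_nat_one_div_lt (sub_pos.2 (mem_Ioi.1 hx))
      exact mem_iUnion.2 ⟨k, by simp only [mem_Ioi]; linarith⟩
    have hle := (measure_mono hun).trans_eq (measure_iUnion_null hz)
    exact h0.ne' (le_antisymm hle zero_le)
  set c₁ : ℝ := ∫ u in Ioi θ₁, Real.exp (u * 0 - (n : ℝ) * cgf ν u) ∂μ with hc₁def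
  have hc₁pos : 0 < c₁ := setIntegral_exp_pos measurableSet_Ioi hμθ₁ (hgint 0)
  set D : ℝ → ℝ := fun y => ∫ u in Iic θ₀, Real.exp ((u - θ₁) * y - (n : ℝ) * cgf ν u) ∂μ
    with hDdef
  have hBD : ∀ y, Bt y = Real.exp (θ₁ * y) * D y := by
    intro y
    simp only [hBdef, hDdef]
    rw [← integral_const_mul]
    congr 1
    funext u
    rw [← Real.exp_add]
    congr 1
    ring
  have hD0 : Tendsto D atTop (nhds (0 : ℝ)) := by
    have hmeas' : ∀ y : ℝ, Measurable fun u : ℝ =>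
        Real.exp ((u - θ₁) * y - (n : ℝ) * cgf ν u) := fun y =>
      Real.measurable_exp.comp
        (((measurable_id.sub_const θ₁).mul_const y).sub ((measurable_cgf ν).const_mul _))
    have h := tendsto_integral_filter_of_dominated_convergence
      (μ := μ.restrict (Iic θ₀)) (l := atTop)
      (F := fun (y : ℝ) (u : ℝ) => Real.exp ((u - θ₁) * y - (n : ℝ) * cgf ν u))
      (f := fun _ => (0 : ℝ))
      (bound := fun u => Real.exp (u * 0 - (n : ℝ) * cgf ν u))
      (Eventually.of_forall fun y => (hmeas' y).aestronglyMeasurable.restrict)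
      ?_ ((hgint 0).restrict) ?_
    · simpa using h
    · filter_upwards [eventually_ge_atTop (0 : ℝ)] with y hy
      refine (ae_restrict_iff' measurableSet_Iic).2 (ae_of_all _ fun u hu => ?_)
      rw [Real.norm_eq_abs, abs_of_nonneg (Real.exp_pos _).le]
      apply Real.exp_le_exp.mpr
      have hu' : u ≤ θ₀ := hu
      nlinarith
    · refine (ae_restrict_iff' measurableSet_Iic).2 (ae_of_all _ fun u hu => ?_)
      have hu' : u ≤ θ₀ := hu
      have h1 : Tendsto (fun y : ℝ => (θ₁ - u) * y) atTop atTop :=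
        Tendsto.const_mul_atTop (by linarith) tendsto_id
      have h2 := tendsto_atBot_add_const_right atTop (-((n : ℝ) * cgf ν u))
        (tendsto_neg_atTop_atBot.comp h1)
      have h3 : Tendsto (fun y : ℝ => (u - θ₁) * y - (n : ℝ) * cgf ν u) atTop atBot :=
        h2.congr fun y => by simp only [Function.comp]; ring
      exact Real.tendsto_exp_atBot.comp h3
  have hub : ∀ᶠ y in atTop, 1 - q ν μ θ₀ n y ≤ D y / c₁ := by
    filter_upwards [eventually_ge_atTop (0 : ℝ)] with y hy
    have hAb : Real.exp (θ₁ * y) * c₁ ≤ A y := by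
      have step1 : Real.exp (θ₁ * y) * c₁ ≤
          ∫ u in Ioi θ₁, Real.exp (u * y - (n : ℝ) * cgf ν u) ∂μ := by
        rw [hc₁def, ← integral_const_mul]
        refine setIntegral_mono_on ((hgint 0).integrableOn.const_mul _)
          (hgint y).integrableOn measurableSet_Ioi fun u hu => ?_
        rw [← Real.exp_add]
        apply Real.exp_le_exp.mpr
        have hu' : θ₁ < u := hu
        nlinarith
      refine step1.trans ?_
      simp only [hAdef]
      exact setIntegral_mono_set (hgint y).integrableOn
        (ae_of_all _ fun u => (Real.exp_pos _).le)
        (HasSubset.Subset.eventuallyLE (Ioi_subset_Ioi hθ₀₁.le))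
    have hDy : Bt y = Real.exp (θ₁ * y) * D y := hBD y
    have hD0' : 0 ≤ D y := integral_nonneg fun u => (Real.exp_pos _).le
    have h1q : 1 - q ν μ θ₀ n y = Bt y / (A y + Bt y) := by
      rw [hq y, one_sub_div (add_pos (hApos y) (hBpos y)).ne']
      congr 1
      ring
    rw [h1q, div_le_div_iff₀ (add_pos (hApos y) (hBpos y)) hc₁pos]
    nlinarith [hApos y, hBpos y, Real.exp_pos (θ₁ * y)]
  have h1q0 : Tendsto (fun y => 1 - q ν μ θ₀ n y) atTop (nhds (0 : ℝ)) := by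
    have hDc : Tendsto (fun y => D y / c₁) atTop (nhds (0 : ℝ)) := by
      simpa using hD0.div_const c₁
    exact tendsto_of_tendsto_of_tendsto_of_le_of_le' tendsto_const_nhds hDc
      (Eventually.of_forall fun y => by linarith [(hq01 y).2]) hub
  have htop : Tendsto (q ν μ θ₀ n) atTop (nhds (1 : ℝ)) := by
    have h := h1q0.const_sub 1
    simpa using h
  -- limit at -∞
  set c₂ : ℝ := ∫ u in Iic θ₀, Real.exp (u * 0 - (n : ℝ) * cgf ν u) ∂μ with hc₂def
  have hc₂pos : 0 < c₂ := setIntegral_exp_pos measurableSet_Iic hμIic (hgint 0)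
  set E : ℝ → ℝ := fun y => ∫ u in Ioi θ₀, Real.exp ((u - θ₀) * y - (n : ℝ) * cgf ν u) ∂μ
    with hEdef
  have hAE : ∀ y, A y = Real.exp (θ₀ * y) * E y := by
    intro y
    simp only [hAdef, hEdef]
    rw [← integral_const_mul]
    congr 1
    funext u
    rw [← Real.exp_add]
    congr 1
    ring
  have hE0 : Tendsto E atBot (nhds (0 : ℝ)) := by
    have hmeas' : ∀ y : ℝ, Measurable fun u : ℝ =>
        Real.exp ((u - θ₀) * y - (n : ℝ) * cgf ν u) := fun y =>
      Real.measurable_exp.comp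
        (((measurable_id.sub_const θ₀).mul_const y).sub ((measurable_cgf ν).const_mul _))
    have h := tendsto_integral_filter_of_dominated_convergence
      (μ := μ.restrict (Ioi θ₀)) (l := atBot)
      (F := fun (y : ℝ) (u : ℝ) => Real.exp ((u - θ₀) * y - (n : ℝ) * cgf ν u))
      (f := fun _ => (0 : ℝ))
      (bound := fun u => Real.exp (u * 0 - (n : ℝ) * cgf ν u))
      (Eventually.of_forall fun y => (hmeas' y).aestronglyMeasurable.restrict)
      ?_ ((hgint 0).restrict) ?_
    · simpa using h
    · filter_upwards [eventually_le_atBot (0 : ℝ)] with y hy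
      refine (ae_restrict_iff' measurableSet_Ioi).2 (ae_of_all _ fun u hu => ?_)
      rw [Real.norm_eq_abs, abs_of_nonneg (Real.exp_pos _).le]
      apply Real.exp_le_exp.mpr
      have hu' : θ₀ < u := hu
      nlinarith
    · refine (ae_restrict_iff' measurableSet_Ioi).2 (ae_of_all _ fun u hu => ?_)
      have hu' : θ₀ < u := hu
      have h1 : Tendsto (fun y : ℝ => (u - θ₀) * y) atBot atBot :=
        Tendsto.const_mul_atBot (by linarith : (0:ℝ) < u - θ₀) tendsto_id
      have h2 := tendsto_atBot_add_const_right atBot (-((n : ℝ) * cgf ν u)) h1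
      have h3 : Tendsto (fun y : ℝ => (u - θ₀) * y - (n : ℝ) * cgf ν u) atBot atBot :=
        h2.congr fun y => by ring
      exact Real.tendsto_exp_atBot.comp h3
  have hub' : ∀ᶠ y in atBot, q ν μ θ₀ n y ≤ E y / c₂ := by
    filter_upwards [eventually_le_atBot (0 : ℝ)] with y hy
    have hBb : Real.exp (θ₀ * y) * c₂ ≤ Bt y := by
      simp only [hBdef]
      rw [hc₂def, ← integral_const_mul]
      refine setIntegral_mono_on ((hgint 0).integrableOn.const_mul _)
        (hgint y).integrableOn measurableSet_Iic fun u hu => ?_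
      rw [← Real.exp_add]
      apply Real.exp_le_exp.mpr
      have hu' : u ≤ θ₀ := hu
      nlinarith
    have hEy : A y = Real.exp (θ₀ * y) * E y := hAE y
    have hE0' : 0 ≤ E y := integral_nonneg fun u => (Real.exp_pos _).le
    rw [hq y, div_le_div_iff₀ (add_pos (hApos y) (hBpos y)) hc₂pos]
    nlinarith [hApos y, hBpos y, Real.exp_pos (θ₀ * y)]
  have hbot : Tendsto (q ν μ θ₀ n) atBot (nhds (0 : ℝ)) := by
    have hEc : Tendsto (fun y => E y / c₂) atBot (nhds (0 : ℝ)) := by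
      simpa using hE0.div_const c₂
    exact tendsto_of_tendsto_of_tendsto_of_le_of_le' tendsto_const_nhds hEc
      (Eventually.of_forall fun y => (hq01 y).1.le) hub'
  -- surjectivity
  have hsurj : SurjOn (q ν μ θ₀ n) univ (Ioo (0 : ℝ) 1) := by
    intro t ht
    obtain ⟨y₁, hy₁⟩ := (hbot.eventually_lt_const ht.1).exists
    obtain ⟨y₂, hy₂⟩ := (htop.eventually_const_lt ht.2).exists
    have hy12 : y₁ ≤ y₂ := by
      by_contra hcon
      push_neg at hcon
      have := hmono hcon
      linarith
    obtain ⟨y, _, hyt⟩ := intermediate_value_Icc hy12 hqcont.continuousOn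
      (⟨hy₁.le, hy₂.le⟩ : t ∈ Icc (q ν μ θ₀ n y₁) (q ν μ θ₀ n y₂))
    exact ⟨y, trivial, hyt⟩
  exact ⟨hmono, ⟨fun y _ => hq01 y, hmono.injective.injOn, hsurj⟩, htop, hbot⟩
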